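/- arXiv:2204.05687 — 3 statements merged into one kernel-verified Lean document; each statement's English description precedes it below -/
import Mathlib

section
/- Let k ≥ 1, λ > 0, and let μ_λ be the product on ℝ^k of k copies of the uniform distribution on [−λ, λ]. Let ι be a finite nonempty type of classes and F : ℝ^k → ι → ℝ a measurable class-score function with 0 ≤ F(ψ)(c) ≤ 1 for all ψ ∈ ℝ^k and c ∈ ι, and define the smoothed score G(φ)(c) = ∫ F(φ + ε)(c) dμ_λ(ε). Fix φ ∈ ℝ^k, a class c_A, set p_A = G(φ)(c_A), and suppose p_B ∈ ℝ satisfies G(φ)(c) ≤ p_B for every class c ≠ c_A. Then for every δ ∈ ℝ^k with ‖δ‖₁ < λ (p_A − p_B), one has G(φ + δ)(c_A) > G(φ + δ)(c) for every class c ≠ c_A; in particular the smoothed classifier's predicted class at φ + δ is still c_A. -/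
open MeasureTheory

/-- The product on `ℝ^k` of `k` copies of the uniform distribution on `[-λ, λ]`. -/
noncomputable def unifPi (k : ℕ) (l : ℝ) : Measure (Fin k → ℝ) :=
  Measure.pi fun _ => (ENNReal.ofReal (2 * l))⁻¹ • volume.restrict (Set.Icc (-l) l)

/-- Smoothing of a class-score function `F` by a measure `μ`. -/
noncomputable def smoothedScore {k : ℕ} {ι : Type} (μ : Measure (Fin k → ℝ))
    (F : (Fin k → ℝ) → ι → ℝ) (φ : Fin k → ℝ) (c : ι) : ℝ :=
  ∫ ε, F (φ + ε) c ∂μ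

/-!
Up to the factor `(2λ)⁻ᵏ`, `G(φ)(c)` is the Lebesgue integral of `F(φ + ·)(c)` over the cube
`[-λ, λ]ᵏ`, and `G(φ + δ)(c)` the integral of the same function over the cube translated by `δ`.
The two cubes differ, in each direction, by slabs of width `|δᵢ|`, so their symmetric difference
has measure at most `‖δ‖₁ (2λ)ᵏ⁻¹`; since `0 ≤ F ≤ 1`, every smoothed score moves by at most
`‖δ‖₁ / (2λ)`. A margin `p_A - p_B > ‖δ‖₁ / λ` therefore survives the perturbation.
-/

open Set
open scoped ENNReal

theorem abs_setIntegral_sub_setIntegral_le {α : Type*} [MeasurableSpace α] {μ : Measure α}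
    {f : α → ℝ} (hf : AEStronglyMeasurable f μ) (hf0 : ∀ x, 0 ≤ f x) (hf1 : ∀ x, f x ≤ 1)
    {A B : Set α} (hA : MeasurableSet A) (hB : MeasurableSet B) (hAfin : μ A ≠ ⊤)
    (hBfin : μ B ≠ ⊤) {M : ℝ≥0∞} (hM : M ≠ ⊤) (hAB : μ (A \ B) ≤ M) (hBA : μ (B \ A) ≤ M) :
    |∫ x in A, f x ∂μ - ∫ x in B, f x ∂μ| ≤ M.toReal := by
  have h_int : ∀ S, μ S ≠ ⊤ → IntegrableOn f S μ := fun S hS =>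
    Integrable.mono' (integrableOn_const (C := (1 : ℝ)) hS) hf.restrict
      (Filter.Eventually.of_forall fun x => by simpa [abs_of_nonneg (hf0 x)] using hf1 x)
  have h_bound : ∀ S, MeasurableSet S → μ S ≤ M →
      0 ≤ ∫ x in S, f x ∂μ ∧ ∫ x in S, f x ∂μ ≤ M.toReal := by
    intro S hS hSM
    have hSfin : μ S ≠ ⊤ := ne_top_of_le_ne_top hM hSM
    refine ⟨setIntegral_nonneg hS fun x _ => hf0 x, ?_⟩
    calc ∫ x in S, f x ∂μ ≤ ∫ _ in S, (1 : ℝ) ∂μ :=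
          setIntegral_mono_on (h_int S hSfin) (integrableOn_const hSfin) hS fun x _ => hf1 x
      _ = μ.real S := by simp
      _ ≤ M.toReal := ENNReal.toReal_mono hM hSM
  have hA_split := integral_inter_add_sdiff hB (h_int A hAfin)
  have hB_split := integral_inter_add_sdiff hA (h_int B hBfin)
  rw [inter_comm] at hB_split
  obtain ⟨hAB0, hAB1⟩ := h_bound _ (hA.diff hB) hAB
  obtain ⟨hBA0, hBA1⟩ := h_bound _ (hB.diff hA) hBA
  rw [abs_le]
  constructor <;> linarith

theorem MeasureTheory.Measure.pi_univ_pi_diff_univ_pi_le {κ : Type*} [Fintype κ] [DecidableEq κ]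
    {α : κ → Type*} [∀ i, MeasurableSpace (α i)] (μ : ∀ i, Measure (α i)) [∀ i, SigmaFinite (μ i)]
    (s t : ∀ i, Set (α i)) :
    Measure.pi μ (univ.pi t \ univ.pi s) ≤
      ∑ i, μ i (t i \ s i) * ∏ j ∈ Finset.univ.erase i, μ j (t j) := by
  have h_cover : univ.pi t \ univ.pi s ⊆ ⋃ i, univ.pi (Function.update t i (t i \ s i)) := by
    rintro x ⟨hxt, hxs⟩
    obtain ⟨i, -, hi⟩ := not_forall₂.1 hxs
    refine mem_iUnion.2 ⟨i, fun j _ => ?_⟩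
    rcases eq_or_ne j i with rfl | hji
    · simpa using ⟨hxt j (mem_univ j), hi⟩
    · simpa [hji] using hxt j (mem_univ j)
  have h_slab : ∀ i, Measure.pi μ (univ.pi (Function.update t i (t i \ s i))) =
      μ i (t i \ s i) * ∏ j ∈ Finset.univ.erase i, μ j (t j) := by
    intro i
    simp only [Measure.pi_pi, Function.apply_update (fun j => ⇑(μ j)),
      Finset.prod_update_of_mem (Finset.mem_univ i), Finset.sdiff_singleton_eq_erase]
  calc Measure.pi μ (univ.pi t \ univ.pi s)
      ≤ Measure.pi μ (⋃ i, univ.pi (Function.update t i (t i \ s i))) := measure_mono h_cover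
    _ ≤ ∑' i, Measure.pi μ (univ.pi (Function.update t i (t i \ s i))) := measure_iUnion_le _
    _ = _ := by rw [tsum_fintype]; exact Finset.sum_congr rfl fun i _ => h_slab i

theorem volume_Icc_diff_Icc_le (a b r : ℝ) :
    volume (Icc (a - r) (a + r) \ Icc (b - r) (b + r)) ≤ ENNReal.ofReal |a - b| := by
  rcases le_total b a with hba | hab
  · calc volume (Icc (a - r) (a + r) \ Icc (b - r) (b + r))
        ≤ volume (Ioc (b + r) (a + r)) := by
          refine measure_mono fun x ⟨⟨h1, h2⟩, hx⟩ => ⟨?_, h2⟩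
          simp only [mem_Icc, not_and_or, not_le] at hx
          rcases hx with hx | hx <;> linarith
      _ = ENNReal.ofReal |a - b| := by
          rw [Real.volume_Ioc, abs_of_nonneg (by linarith)]; ring_nf
  · calc volume (Icc (a - r) (a + r) \ Icc (b - r) (b + r))
        ≤ volume (Ico (a - r) (b - r)) := by
          refine measure_mono fun x ⟨⟨h1, h2⟩, hx⟩ => ⟨h1, ?_⟩
          simp only [mem_Icc, not_and_or, not_le] at hx
          rcases hx with hx | hx <;> linarith
      _ = ENNReal.ofReal |a - b| := by
          rw [Real.volume_Ico, abs_of_nonpos (by linarith)]; ring_nf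

theorem setIntegral_preimage_add_right {G E : Type*} [AddGroup G] [MeasurableSpace G]
    [MeasurableAdd G] [NormedAddCommGroup E] [NormedSpace ℝ E] (μ : Measure G)
    [μ.IsAddRightInvariant] (g : G → E) (δ : G) (T : Set G) :
    ∫ x in (· + δ) ⁻¹' T, g (x + δ) ∂μ = ∫ x in T, g x ∂μ :=
  (measurePreserving_add_right μ δ).setIntegral_preimage_emb
    (MeasurableEquiv.addRight δ).measurableEmbedding g T

/-- The coefficient is taken in `ℝ≥0` so that the measure is σ-finite for every `l`. -/
noncomputable def scaledVolume (l : ℝ) : Measure ℝ :=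
  ((2 * l)⁻¹).toNNReal • volume

instance (l : ℝ) : SigmaFinite (scaledVolume l) := SMul.sigmaFinite _

instance (l : ℝ) : (scaledVolume l).IsAddRightInvariant := isAddRightInvariant_smul_nnreal _

theorem scaledVolume_apply (l : ℝ) (s : Set ℝ) :
    scaledVolume l s = ENNReal.ofReal (2 * l)⁻¹ * volume s := rfl

theorem scaledVolume_Icc {l : ℝ} (hl : 0 < l) (a : ℝ) :
    scaledVolume l (Icc (a - l) (a + l)) = 1 := by
  rw [scaledVolume_apply, Real.volume_Icc, ← ENNReal.ofReal_mul (by positivity),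
    show (2 * l)⁻¹ * (a + l - (a - l)) = 1 by field_simp; ring, ENNReal.ofReal_one]

section Box

variable {κ : Type*}

def box (a : κ → ℝ) (l : ℝ) : Set (κ → ℝ) :=
  univ.pi fun i => Icc (a i - l) (a i + l)

theorem measurableSet_box [Countable κ] (a : κ → ℝ) (l : ℝ) :
    MeasurableSet (box a l) :=
  MeasurableSet.univ_pi fun _ => measurableSet_Icc

theorem preimage_add_right_box (a δ : κ → ℝ) (l : ℝ) :
    (· + δ) ⁻¹' box a l = box (a - δ) l := by
  ext x
  simp only [box, mem_preimage, mem_univ_pi, mem_Icc, Pi.add_apply, Pi.sub_apply]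
  refine forall_congr' fun i => ?_
  constructor <;> rintro ⟨h1, h2⟩ <;> constructor <;> linarith

theorem pi_scaledVolume_box [Fintype κ] {l : ℝ} (hl : 0 < l) (a : κ → ℝ) :
    Measure.pi (fun _ => scaledVolume l) (box a l) = 1 := by
  simp only [box, Measure.pi_pi, scaledVolume_Icc hl, Finset.prod_const_one]

theorem pi_scaledVolume_box_diff_box_le [Fintype κ] [DecidableEq κ] {l : ℝ} (hl : 0 < l)
    (a b : κ → ℝ) :
    Measure.pi (fun _ => scaledVolume l) (box a l \ box b l) ≤
      ENNReal.ofReal ((∑ i, |a i - b i|) / (2 * l)) := by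
  refine (Measure.pi_univ_pi_diff_univ_pi_le _ _ _).trans ?_
  simp only [scaledVolume_Icc hl, Finset.prod_const_one, mul_one]
  calc ∑ i, scaledVolume l (Icc (a i - l) (a i + l) \ Icc (b i - l) (b i + l))
      ≤ ∑ i, ENNReal.ofReal (|a i - b i| / (2 * l)) := by
        refine Finset.sum_le_sum fun i _ => ?_
        rw [scaledVolume_apply, div_eq_inv_mul, ENNReal.ofReal_mul (by positivity)]
        gcongr
        exact volume_Icc_diff_Icc_le _ _ _
    _ = ENNReal.ofReal ((∑ i, |a i - b i|) / (2 * l)) := by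
        rw [Finset.sum_div, ENNReal.ofReal_sum_of_nonneg fun i _ => by positivity]

end Box

theorem unifPi_eq_restrict (k : ℕ) {l : ℝ} (hl : 0 < l) :
    unifPi k l = (Measure.pi fun _ => scaledVolume l).restrict (box 0 l) := by
  rw [box, Measure.restrict_pi_pi, unifPi]
  congr 1
  funext i
  rw [scaledVolume, Measure.restrict_smul, ENNReal.smul_def, ENNReal.ofNNReal_toNNReal,
    ENNReal.ofReal_inv_of_pos (by positivity)]
  simp

theorem abs_smoothedScore_add_sub_le {k : ℕ} {l : ℝ} (hl : 0 < l) {ι : Type}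
    (F : (Fin k → ℝ) → ι → ℝ) (hFmeas : ∀ c, Measurable fun ψ => F ψ c)
    (hF0 : ∀ ψ c, 0 ≤ F ψ c) (hF1 : ∀ ψ c, F ψ c ≤ 1) (ψ δ : Fin k → ℝ) (c : ι) :
    |smoothedScore (unifPi k l) F (ψ + δ) c - smoothedScore (unifPi k l) F ψ c| ≤
      (∑ i, |δ i|) / (2 * l) := by
  set ρ := Measure.pi fun _ : Fin k => scaledVolume l
  set f := fun ε => F (ψ + ε) c
  have h_base : smoothedScore (unifPi k l) F ψ c = ∫ ε in box 0 l, f ε ∂ρ := by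
    rw [smoothedScore, unifPi_eq_restrict k hl]
  have h_shift : smoothedScore (unifPi k l) F (ψ + δ) c = ∫ ε in box δ l, f ε ∂ρ := by
    rw [← setIntegral_preimage_add_right ρ f δ, preimage_add_right_box, sub_self, smoothedScore,
      unifPi_eq_restrict k hl]
    congr 1 with ε
    simp only [f]
    abel_nf
  have h_box : ∀ a, ρ (box a l) ≠ ⊤ := fun a => by simp [ρ, pi_scaledVolume_box hl]
  have h_out := pi_scaledVolume_box_diff_box_le hl δ 0
  have h_in := pi_scaledVolume_box_diff_box_le hl 0 δ
  simp only [Pi.zero_apply, sub_zero, zero_sub, abs_neg] at h_out h_in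
  rw [h_shift, h_base, ← ENNReal.toReal_ofReal (by positivity : 0 ≤ (∑ i, |δ i|) / (2 * l))]
  exact abs_setIntegral_sub_setIntegral_le
    ((hFmeas c).comp (measurable_const_add ψ)).aestronglyMeasurable (fun _ => hF0 _ c)
    (fun _ => hF1 _ c) (measurableSet_box δ l) (measurableSet_box 0 l) (h_box δ) (h_box 0)
    ENNReal.ofReal_ne_top h_out h_in

theorem stmt_0_general {k : ℕ} {l : ℝ} (hl : 0 < l)
    {ι : Type}
    (F : (Fin k → ℝ) → ι → ℝ)
    (hFmeas : ∀ c, Measurable fun ψ => F ψ c)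
    (hF0 : ∀ ψ c, 0 ≤ F ψ c) (hF1 : ∀ ψ c, F ψ c ≤ 1)
    (φ : Fin k → ℝ) (cA : ι) (pB : ℝ)
    (hpB : ∀ c, c ≠ cA → smoothedScore (unifPi k l) F φ c ≤ pB)
    (δ : Fin k → ℝ)
    (hδ : ∑ i, |δ i| < l * (smoothedScore (unifPi k l) F φ cA - pB)) :
    ∀ c, c ≠ cA →
      smoothedScore (unifPi k l) F (φ + δ) c < smoothedScore (unifPi k l) F (φ + δ) cA := by
  intro c hc
  have h_margin : (∑ i, |δ i|) / (2 * l) < (smoothedScore (unifPi k l) F φ cA - pB) / 2 := by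
    rw [div_lt_div_iff₀ (by positivity) two_pos]
    linarith
  have h_cA := abs_le.1 (abs_smoothedScore_add_sub_le hl F hFmeas hF0 hF1 φ δ cA)
  have h_c := abs_le.1 (abs_smoothedScore_add_sub_le hl F hFmeas hF0 hF1 φ δ c)
  linarith [hpB c hc]

theorem stmt_0 {k : ℕ} (hk : 1 ≤ k) {l : ℝ} (hl : 0 < l)
    {ι : Type} [Fintype ι] [Nonempty ι]
    (F : (Fin k → ℝ) → ι → ℝ)
    (hFmeas : ∀ c, Measurable fun ψ => F ψ c)
    (hF0 : ∀ ψ c, 0 ≤ F ψ c) (hF1 : ∀ ψ c, F ψ c ≤ 1)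
    (φ : Fin k → ℝ) (cA : ι) (pB : ℝ)
    (hpB : ∀ c, c ≠ cA → smoothedScore (unifPi k l) F φ c ≤ pB)
    (δ : Fin k → ℝ)
    (hδ : ∑ i, |δ i| < l * (smoothedScore (unifPi k l) F φ cA - pB)) :
    ∀ c, c ≠ cA →
      smoothedScore (unifPi k l) F (φ + δ) c < smoothedScore (unifPi k l) F (φ + δ) cA :=
  stmt_0_general hl F hFmeas hF0 hF1 φ cA pB hpB δ hδ
end

section
/- Let σ > 0 and let γ_σ = N(0, σ²) be the centered Gaussian measure on ℝ with variance σ². For any measurable h : ℝ → ℝ with 0 ≤ h ≤ 1, define ĥ(x) = ∫ h(x + ε) dγ_σ(ε). If a ∈ ℝ satisfies ĥ(x) ≥ Φ(a), then for every t ∈ ℝ one has ĥ(x + t) ≥ Φ(a − |t|/σ), where Φ is the standard normal CDF. Equivalently, x ↦ Φ⁻¹(ĥ(x)) is σ⁻¹-Lipschitz. -/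
/-!
Rescaling by `σ` reduces the claim to unit variance: `ĥ(y) = ∫ g d𝒩(y/σ, 1)` with
`g u = h (σ u)`. For `m ≤ s` the likelihood ratio of `𝒩(s, 1)` to `𝒩(m, 1)` is increasing in `u`,
so by the Neyman–Pearson argument a half-line indicator `1_{(-∞, b]}` has the smallest
`𝒩(s, 1)`-mean among all tests `0 ≤ g ≤ 1` with at least its `𝒩(m, 1)`-mean; for half-lines both
means are values of `Φ`. The case `s < m` follows by the reflection `u ↦ -u`.
-/

open MeasureTheory ProbabilityTheory

/-- The standard normal cumulative distribution function `Φ(t) = N(0,1)((-∞, t])`. -/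
noncomputable def stdNormalCDF (t : ℝ) : ℝ :=
  (gaussianReal 0 1 (Set.Iic t)).toReal

open Set
open scoped NNReal

section NeymanPearson

variable {α : Type*} [MeasurableSpace α] {μ : Measure α} {p q g : α → ℝ} {A : Set α} {r : ℝ}

lemma integral_mul_sub_setIntegral_eq (hA : MeasurableSet A) (hg : AEStronglyMeasurable g μ)
    (g0 : ∀ u, 0 ≤ g u) (g1 : ∀ u, g u ≤ 1) (hp : Integrable p μ) :
    ∫ u, p u * g u ∂μ - ∫ u in A, p u ∂μ = ∫ u, p u * (g u - A.indicator 1 u) ∂μ := by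
  have hpg : Integrable (fun u => p u * g u) μ :=
    hp.mul_bdd hg (.of_forall fun u => by rw [Real.norm_of_nonneg (g0 u)]; exact g1 u)
  rw [← integral_indicator hA, ← integral_sub hpg (hp.indicator hA)]
  congr 1 with u
  by_cases hu : u ∈ A <;> simp [hu, mul_sub]

/-- The Neyman–Pearson lemma. -/
lemma setIntegral_le_integral_mul_of_threshold (hA : MeasurableSet A)
    (hp : Integrable p μ) (hq : Integrable q μ) (hg : AEStronglyMeasurable g μ)
    (g0 : ∀ u, 0 ≤ g u) (g1 : ∀ u, g u ≤ 1) (hr : 0 ≤ r)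
    (hqA : ∀ u ∈ A, q u ≤ r * p u) (hqAc : ∀ u ∉ A, r * p u ≤ q u)
    (hpg : ∫ u in A, p u ∂μ ≤ ∫ u, p u * g u ∂μ) :
    ∫ u in A, q u ∂μ ≤ ∫ u, q u * g u ∂μ := by
  set k : α → ℝ := fun u => g u - A.indicator 1 u
  have hpk := integral_mul_sub_setIntegral_eq hA hg g0 g1 hp
  have hqk := integral_mul_sub_setIntegral_eq hA hg g0 g1 hq
  have hk : ∀ u, |k u| ≤ 1 := fun u =>
    abs_sub_le_of_nonneg_of_le (g0 u) (g1 u) (indicator_nonneg (fun _ _ => zero_le_one) u)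
      (indicator_apply_le' (fun _ => le_rfl) (fun _ => zero_le_one))
  have hint : ∀ {f : α → ℝ}, Integrable f μ → Integrable (fun u => f u * k u) μ := fun hf =>
    hf.mul_bdd (hg.sub (aestronglyMeasurable_const.indicator hA)) (.of_forall hk)
  have key : 0 ≤ ∫ u, (q u - r * p u) * k u ∂μ := integral_nonneg fun u => by
    by_cases hu : u ∈ A
    · refine mul_nonneg_of_nonpos_of_nonpos (by linarith [hqA u hu]) ?_
      simp [k, hu, g1 u]
    · exact mul_nonneg (by linarith [hqAc u hu]) (by simp [k, hu, g0 u])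
  have split :
      ∫ u, (q u - r * p u) * k u ∂μ = ∫ u, q u * k u ∂μ - r * ∫ u, p u * k u ∂μ := by
    simp_rw [sub_mul, mul_assoc]
    rw [integral_sub (hint hq) ((hint hp).const_mul r), integral_const_mul]
  nlinarith [mul_nonneg hr (sub_nonneg.2 hpg)]

end NeymanPearson

section Gaussian

lemma gaussianPDFReal_one_eq_mul_exp (m s u : ℝ) :
    gaussianPDFReal s 1 u =
      gaussianPDFReal m 1 u * Real.exp ((s - m) * u - (s ^ 2 - m ^ 2) / 2) := by
  simp only [gaussianPDFReal, NNReal.coe_one, mul_one, mul_assoc, ← Real.exp_add]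
  ring_nf

lemma stdNormalCDF_sub_eq_setIntegral (b s : ℝ) :
    stdNormalCDF (b - s) = ∫ u in Iic b, gaussianPDFReal s 1 u := by
  have hmap : (gaussianReal 0 1).map (· + s) = gaussianReal s 1 := by
    rw [gaussianReal_map_add_const, zero_add]
  rw [stdNormalCDF, ← preimage_add_const_Iic,
    ← Measure.map_apply (measurable_add_const s) measurableSet_Iic, hmap,
    gaussianReal_apply_eq_integral s one_ne_zero, ENNReal.toReal_ofReal
      (setIntegral_nonneg measurableSet_Iic fun u _ => gaussianPDFReal_nonneg _ _ _)]

lemma integral_comp_neg_gaussianReal (f : ℝ → ℝ) (m : ℝ) (v : ℝ≥0) :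
    ∫ u, f (-u) ∂gaussianReal (-m) v = ∫ u, f u ∂gaussianReal m v := by
  rw [← measurableEmbedding_neg.integral_map, gaussianReal_map_neg, neg_neg]

lemma integral_const_add_gaussianReal {σ : ℝ} (hσ : σ ≠ 0) (f : ℝ → ℝ) (y : ℝ) :
    ∫ ε, f (y + ε) ∂gaussianReal 0 ⟨σ ^ 2, sq_nonneg σ⟩ =
      ∫ u, f (σ * u) ∂gaussianReal (y / σ) 1 := by
  have hadd : (gaussianReal 0 ⟨σ ^ 2, sq_nonneg σ⟩).map (y + ·) =
      gaussianReal y ⟨σ ^ 2, sq_nonneg σ⟩ := by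
    simpa using gaussianReal_map_const_add (μ := 0) (v := ⟨σ ^ 2, sq_nonneg σ⟩) y
  have hmul : (gaussianReal (y / σ) 1).map (σ * ·) = gaussianReal y ⟨σ ^ 2, sq_nonneg σ⟩ := by
    rw [gaussianReal_map_const_mul, mul_one, mul_div_cancel₀ _ hσ]
    rfl
  rw [← (measurableEmbedding_addLeft y).integral_map, hadd, ← hmul,
    (measurableEmbedding_mulLeft₀ hσ).integral_map]

end Gaussian

section Stability

variable {g : ℝ → ℝ} {a : ℝ}

lemma stdNormalCDF_sub_le_integral_gaussianReal_of_le (hg : Measurable g)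
    (g0 : ∀ u, 0 ≤ g u) (g1 : ∀ u, g u ≤ 1) {m s : ℝ} (hms : m ≤ s)
    (ha : stdNormalCDF a ≤ ∫ u, g u ∂gaussianReal m 1) :
    stdNormalCDF (a - (s - m)) ≤ ∫ u, g u ∂gaussianReal s 1 := by
  set ratio : ℝ → ℝ := fun u => Real.exp ((s - m) * u - (s ^ 2 - m ^ 2) / 2)
  have ratio_mono : Monotone ratio := fun u v huv => Real.exp_le_exp.2 (by nlinarith)
  rw [integral_gaussianReal_eq_integral_smul one_ne_zero] at ha ⊢
  rw [show a = a + m - m by ring, stdNormalCDF_sub_eq_setIntegral] at ha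
  rw [show a - (s - m) = a + m - s by ring, stdNormalCDF_sub_eq_setIntegral]
  refine setIntegral_le_integral_mul_of_threshold (r := ratio (a + m)) measurableSet_Iic
    (integrable_gaussianPDFReal m 1) (integrable_gaussianPDFReal s 1) hg.aestronglyMeasurable
    g0 g1 (Real.exp_pos _).le (fun u hu => ?_) (fun u hu => ?_) ha
  · rw [gaussianPDFReal_one_eq_mul_exp m s u, mul_comm]
    exact mul_le_mul_of_nonneg_right (ratio_mono hu) (gaussianPDFReal_nonneg _ _ _)
  · rw [gaussianPDFReal_one_eq_mul_exp m s u, mul_comm]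
    exact mul_le_mul_of_nonneg_left (ratio_mono (le_of_not_ge hu)) (gaussianPDFReal_nonneg _ _ _)

lemma stdNormalCDF_sub_abs_le_integral_gaussianReal (hg : Measurable g)
    (g0 : ∀ u, 0 ≤ g u) (g1 : ∀ u, g u ≤ 1) {m : ℝ}
    (ha : stdNormalCDF a ≤ ∫ u, g u ∂gaussianReal m 1) (s : ℝ) :
    stdNormalCDF (a - |s - m|) ≤ ∫ u, g u ∂gaussianReal s 1 := by
  rcases le_total m s with hms | hsm
  · rw [abs_of_nonneg (sub_nonneg.2 hms)]
    exact stdNormalCDF_sub_le_integral_gaussianReal_of_le hg g0 g1 hms ha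
  · rw [← integral_comp_neg_gaussianReal] at ha ⊢
    rw [abs_sub_comm, abs_of_nonneg (sub_nonneg.2 hsm), show m - s = -s - -m by ring]
    exact stdNormalCDF_sub_le_integral_gaussianReal_of_le (hg.comp measurable_neg)
      (fun _ => g0 _) (fun _ => g1 _) (neg_le_neg hsm) ha

end Stability

theorem stmt_4 {σ : ℝ} (hσ : 0 < σ)
    (h : ℝ → ℝ) (hmeas : Measurable h)
    (h0 : ∀ ψ, 0 ≤ h ψ) (h1 : ∀ ψ, h ψ ≤ 1)
    (x : ℝ) (a : ℝ)
    (ha : stdNormalCDF a ≤ ∫ ε, h (x + ε) ∂(gaussianReal 0 ⟨σ ^ 2, sq_nonneg σ⟩)) :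
    ∀ t : ℝ, stdNormalCDF (a - |t| / σ) ≤
      ∫ ε, h (x + t + ε) ∂(gaussianReal 0 ⟨σ ^ 2, sq_nonneg σ⟩) := by
  intro t
  rw [integral_const_add_gaussianReal hσ.ne'] at ha ⊢
  have hshift : |t| / σ = |(x + t) / σ - x / σ| := by
    rw [← sub_div, add_sub_cancel_left, abs_div, abs_of_pos hσ]
  rw [hshift]
  exact stdNormalCDF_sub_abs_le_integral_gaussianReal (hmeas.comp (measurable_const_mul σ))
    (fun _ => h0 _) (fun _ => h1 _) ha _
end

section
/- Let k ≥ 1, λ > 0, and for t ∈ ℝ^k let B = [−λ, λ]^k ⊆ ℝ^k and B + t its translate. Then the Lebesgue measure of the intersection satisfies vol(B ∩ (B + t)) = ∏_{i=1}^{k} max(0, 2λ − |t_i|); consequently, writing μ_λ for the product of k copies of the uniform distribution on [−λ, λ], for every measurable set s ⊆ ℝ^k one has |μ_λ({ε : ε + x ∈ s}) − μ_λ({ε : ε + y ∈ s})| ≤ 1 − ∏_{i=1}^{k} max(0, 1 − |x_i − y_i|/(2λ)) ≤ ‖x − y‖₁/(2λ) for all x, y ∈ ℝ^k. -/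
/-!
The intersection of the box `B = [-λ, λ]^k` with its translate `B + t` is the box with sides `[-λ + max(0, tᵢ), λ + min(0, tᵢ)]`, of lengths `max(0, 2λ - |tᵢ|)`.

Under `μ_λ = (2λ)⁻ᵏ vol|_B`, the event `ε + y ∈ s` is the event `ε + x ∈ s` with `B` replaced
by `B + (y - x)`, by translation invariance of Lebesgue measure. Two sets `A, A'` of equal finite
measure give masses to any `s` differing by at most `vol(A \ A') = vol A - vol(A ∩ A')`, which
after normalisation is `1 - ∏ max(0, 1 - |xᵢ - yᵢ|/(2λ))`; finally `1 - ∏ uᵢ ≤ ∑ (1 - uᵢ)` for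
`uᵢ ∈ [0, 1]`.
-/

open MeasureTheory

open Set

theorem one_sub_prod_le_sum_one_sub {ι : Type*} (s : Finset ι) {u : ι → ℝ}
    (h0 : ∀ i ∈ s, 0 ≤ u i) (h1 : ∀ i ∈ s, u i ≤ 1) :
    1 - ∏ i ∈ s, u i ≤ ∑ i ∈ s, (1 - u i) := by
  classical
  induction s using Finset.induction_on with
  | empty => simp
  | insert a s ha ih =>
    simp only [Finset.mem_insert, forall_eq_or_imp] at h0 h1
    rw [Finset.prod_insert ha, Finset.sum_insert ha]
    have hP : ∏ i ∈ s, u i ≤ 1 := Finset.prod_le_one h0.2 h1.2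
    nlinarith [ih h0.2 h1.2, mul_nonneg (sub_nonneg.2 h1.1) (sub_nonneg.2 hP)]

theorem one_sub_prod_max_zero_le_sum {ι : Type*} [Fintype ι] {d : ι → ℝ} (hd : ∀ i, 0 ≤ d i) :
    1 - ∏ i, max 0 (1 - d i) ≤ ∑ i, d i :=
  calc 1 - ∏ i, max 0 (1 - d i)
      ≤ ∑ i, (1 - max 0 (1 - d i)) :=
        one_sub_prod_le_sum_one_sub _ (fun _ _ => le_max_left _ _)
          (fun i _ => max_le zero_le_one (by linarith [hd i]))
    _ ≤ ∑ i, d i := Finset.sum_le_sum fun i _ => by linarith [le_max_right 0 (1 - d i)]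

theorem inv_pow_card_mul_prod_max_zero_sub {ι : Type*} [Fintype ι] {c : ℝ} (hc : 0 < c)
    (d : ι → ℝ) :
    (c ^ Fintype.card ι)⁻¹ * ∏ i, max 0 (c - d i) = ∏ i, max 0 (1 - d i / c) := by
  rw [← inv_pow, ← Finset.card_univ, ← Finset.prod_const, ← Finset.prod_mul_distrib]
  refine Finset.prod_congr rfl fun i _ => ?_
  rw [mul_max_of_nonneg _ _ (inv_nonneg.2 hc.le), mul_zero, mul_sub, inv_mul_cancel₀ hc.ne',
    inv_mul_eq_div]

section MeasureInter

variable {α : Type*} [MeasurableSpace α] {μ : Measure α} {s A A' : Set α}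

theorem measureReal_inter_sub_measureReal_inter_le (hA' : MeasurableSet A') (hA_fin : μ A ≠ ⊤)
    (hA'_fin : μ A' ≠ ⊤) :
    μ.real (s ∩ A) - μ.real (s ∩ A') ≤ μ.real A - μ.real (A ∩ A') := by
  have hcover : s ∩ A ⊆ s ∩ A' ∪ A \ A' := fun z ⟨hzs, hzA⟩ => by
    by_cases hzA' : z ∈ A'
    · exact Or.inl ⟨hzs, hzA'⟩
    · exact Or.inr ⟨hzA, hzA'⟩
  have hsplit := measureReal_inter_add_sdiff (μ := μ) hA' hA_fin
  have hcover_le := (measureReal_mono hcover (measure_union_ne_top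
    (measure_ne_top_of_subset inter_subset_right hA'_fin)
    (measure_ne_top_of_subset sdiff_subset hA_fin))).trans (measureReal_union_le _ _)
  linarith

theorem abs_measureReal_inter_sub_measureReal_inter_le (hA : MeasurableSet A)
    (hA' : MeasurableSet A') (hA_fin : μ A ≠ ⊤) (heq : μ A' = μ A) :
    |μ.real (s ∩ A) - μ.real (s ∩ A')| ≤ μ.real A - μ.real (A ∩ A') := by
  have hA'_fin : μ A' ≠ ⊤ := heq ▸ hA_fin
  have heq_real : μ.real A' = μ.real A := by rw [measureReal_def, heq, measureReal_def]
  have hswap := measureReal_inter_sub_measureReal_inter_le (s := s) hA hA'_fin hA_fin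
  rw [heq_real, inter_comm A' A] at hswap
  exact abs_sub_le_iff.2 ⟨measureReal_inter_sub_measureReal_inter_le hA' hA_fin hA'_fin, hswap⟩

end MeasureInter

theorem measureReal_preimage_add_inter_eq {G : Type*} [MeasurableSpace G] [AddGroup G]
    [MeasurableAdd G] (μ : Measure G) [μ.IsAddRightInvariant] (s B : Set G) (x y : G) :
    μ.real ({ε | ε + y ∈ s} ∩ B) = μ.real ({ε | ε + x ∈ s} ∩ (· + (y - x)) '' B) := by
  have hpre : {ε | ε + y ∈ s} = (· + (y - x)) ⁻¹' {ε | ε + x ∈ s} := by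
    ext ε; simp [add_assoc]
  rw [hpre, measureReal_def, measureReal_def,
    ← measure_preimage_add_right μ (y - x) ({ε | ε + x ∈ s} ∩ (· + (y - x)) '' B), preimage_inter,
    (add_left_injective (y - x)).preimage_image]

theorem volume_pi_Icc_inter_image_add {ι : Type*} [Fintype ι] (l : ℝ) (t : ι → ℝ) :
    volume ((univ.pi fun _ : ι => Icc (-l) l) ∩ (· + t) '' (univ.pi fun _ : ι => Icc (-l) l)) =
      ENNReal.ofReal (∏ i, max 0 (2 * l - |t i|)) := by
  rw [pi_univ_Icc (fun _ => -l) (fun _ => l), image_add_const_Icc, Icc_inter_Icc,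
    Real.volume_Icc_pi, ENNReal.ofReal_prod_of_nonneg fun i _ => le_max_left _ _]
  refine Finset.prod_congr rfl fun i _ => ?_
  simp only [Pi.sup_apply, Pi.inf_apply, Pi.add_apply, ENNReal.ofReal_max, ENNReal.ofReal_zero,
    zero_max]
  congr 1
  rcases le_total 0 (t i) with h | h
  · rw [abs_of_nonneg h, min_eq_left (by linarith), max_eq_right (by linarith)]; ring
  · rw [abs_of_nonpos h, min_eq_right (by linarith), max_eq_left (by linarith)]; ring

theorem volume_real_pi_Icc {ι : Type*} [Fintype ι] {l : ℝ} (hl : 0 ≤ l) :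
    volume.real (univ.pi fun _ : ι => Icc (-l) l) = (2 * l) ^ Fintype.card ι := by
  rw [pi_univ_Icc (fun _ => -l) (fun _ => l), measureReal_def,
    Real.volume_Icc_pi_toReal fun _ => by linarith]
  simp only [sub_neg_eq_add, ← two_mul, Finset.prod_const, Finset.card_univ]

theorem unifPi_eq_smul_restrict {k : ℕ} {l : ℝ} (hl : 0 < l) :
    unifPi k l = ENNReal.ofReal ((2 * l) ^ k)⁻¹ •
      volume.restrict (univ.pi fun _ : Fin k => Icc (-l) l) := by
  have h2l : 0 < 2 * l := by linarith
  have : IsFiniteMeasure ((ENNReal.ofReal (2 * l))⁻¹ • volume.restrict (Icc (-l) l)) :=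
    Measure.smul_finite _ (ENNReal.inv_ne_top.2 (ENNReal.ofReal_pos.2 h2l).ne')
  refine Measure.pi_eq fun E hE => ?_
  rw [Measure.smul_apply, Measure.restrict_apply (MeasurableSet.univ_pi hE), ← pi_inter_distrib,
    volume_pi_pi, smul_eq_mul]
  simp only [Measure.smul_apply, Measure.restrict_apply (hE _), smul_eq_mul]
  rw [Finset.prod_mul_distrib, Finset.prod_const, Finset.card_univ, Fintype.card_fin,
    ENNReal.ofReal_inv_of_pos (pow_pos h2l k), ENNReal.ofReal_pow h2l.le, ENNReal.inv_pow]

theorem unifPi_real_apply {k : ℕ} {l : ℝ} (hl : 0 < l) (E : Set (Fin k → ℝ)) :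
    (unifPi k l).real E = ((2 * l) ^ k)⁻¹ * volume.real (E ∩ univ.pi fun _ => Icc (-l) l) := by
  rw [unifPi_eq_smul_restrict hl, measureReal_def, Measure.smul_apply, smul_eq_mul,
    Measure.restrict_apply' (MeasurableSet.univ_pi fun _ => measurableSet_Icc), ENNReal.toReal_mul,
    ENNReal.toReal_ofReal (by positivity), measureReal_def]

theorem abs_unifPi_real_preimage_add_sub_le {k : ℕ} {l : ℝ} (hl : 0 < l)
    (s : Set (Fin k → ℝ)) (x y : Fin k → ℝ) :
    |(unifPi k l).real {ε | ε + x ∈ s} - (unifPi k l).real {ε | ε + y ∈ s}| ≤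
      1 - ((2 * l) ^ k)⁻¹ * volume.real ((univ.pi fun _ => Icc (-l) l) ∩
        (· + (y - x)) '' univ.pi fun _ => Icc (-l) l) := by
  set B := univ.pi fun _ : Fin k => Icc (-l) l
  have hB : MeasurableSet B := MeasurableSet.univ_pi fun _ => measurableSet_Icc
  have hBt : MeasurableSet ((· + (y - x)) '' B) := by
    rw [image_add_right]; exact hB.preimage (measurable_add_const _)
  have hvol_translate : volume ((· + (y - x)) '' B) = volume B := by
    rw [image_add_right, measure_preimage_add_right]
  rw [unifPi_real_apply hl, unifPi_real_apply hl, measureReal_preimage_add_inter_eq volume s B x y,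
    ← mul_sub, abs_mul, abs_of_pos (by positivity)]
  calc ((2 * l) ^ k)⁻¹ * |_|
      ≤ ((2 * l) ^ k)⁻¹ * (volume.real B - volume.real (B ∩ (· + (y - x)) '' B)) := by
        gcongr
        exact abs_measureReal_inter_sub_measureReal_inter_le hB hBt
          (isCompact_univ_pi fun _ => isCompact_Icc).measure_lt_top.ne hvol_translate
    _ = _ := by
      rw [mul_sub, volume_real_pi_Icc hl.le, Fintype.card_fin, inv_mul_cancel₀ (by positivity)]

theorem stmt_11_general {k : ℕ} {l : ℝ} (hl : 0 < l) :
    (∀ t : Fin k → ℝ,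
      volume ((Set.univ.pi fun _ : Fin k => Set.Icc (-l) l) ∩
          ((fun z => z + t) '' (Set.univ.pi fun _ : Fin k => Set.Icc (-l) l))) =
        ENNReal.ofReal (∏ i, max 0 (2 * l - |t i|))) ∧
    (∀ s : Set (Fin k → ℝ), MeasurableSet s → ∀ x y : Fin k → ℝ,
      |((unifPi k l) {ε | ε + x ∈ s}).toReal - ((unifPi k l) {ε | ε + y ∈ s}).toReal| ≤
          1 - ∏ i, max 0 (1 - |x i - y i| / (2 * l)) ∧
        1 - ∏ i, max 0 (1 - |x i - y i| / (2 * l)) ≤ (∑ i, |x i - y i|) / (2 * l)) := by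
  refine ⟨volume_pi_Icc_inter_image_add l, fun s _ x y => ⟨?_, ?_⟩⟩
  · have hoverlap : volume.real ((univ.pi fun _ => Icc (-l) l) ∩
        (· + (y - x)) '' univ.pi fun _ => Icc (-l) l) = ∏ i, max 0 (2 * l - |x i - y i|) := by
      rw [measureReal_def, volume_pi_Icc_inter_image_add,
        ENNReal.toReal_ofReal (Finset.prod_nonneg fun _ _ => le_max_left _ _)]
      simp only [Pi.sub_apply, abs_sub_comm (y _)]
    have hnormalise := inv_pow_card_mul_prod_max_zero_sub (ι := Fin k)
      (by positivity : 0 < 2 * l) fun i => |x i - y i|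
    rw [Fintype.card_fin] at hnormalise
    have hclose := abs_unifPi_real_preimage_add_sub_le hl s x y
    rwa [hoverlap, hnormalise] at hclose
  · rw [Finset.sum_div]
    exact one_sub_prod_max_zero_le_sum fun i => div_nonneg (abs_nonneg _) (by positivity)

theorem stmt_11 {k : ℕ} (hk : 1 ≤ k) {l : ℝ} (hl : 0 < l) :
    (∀ t : Fin k → ℝ,
      volume ((Set.univ.pi fun _ : Fin k => Set.Icc (-l) l) ∩
          ((fun z => z + t) '' (Set.univ.pi fun _ : Fin k => Set.Icc (-l) l))) =
        ENNReal.ofReal (∏ i, max 0 (2 * l - |t i|))) ∧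
    (∀ s : Set (Fin k → ℝ), MeasurableSet s → ∀ x y : Fin k → ℝ,
      |((unifPi k l) {ε | ε + x ∈ s}).toReal - ((unifPi k l) {ε | ε + y ∈ s}).toReal| ≤
          1 - ∏ i, max 0 (1 - |x i - y i| / (2 * l)) ∧
        1 - ∏ i, max 0 (1 - |x i - y i| / (2 * l)) ≤ (∑ i, |x i - y i|) / (2 * l)) :=
  stmt_11_general hl
end
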